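/- Let Γ be a finite group with a real representation (ρ,E), call γ ∈ Γ elliptic if E^{ρ(γ)} = 0, and let L be the set of subgroups H ≤ Γ with E^{ρ(H)} ≠ 0. Then the quotient Ell(Γ) = G_ℂ(Γ) / Σ_{H∈L} Ind_H^Γ(G_ℂ(H)) of the complexified Grothendieck group of finite-dimensional representations has dimension equal to the number of elliptic conjugacy classes of Γ. -/

import Mathlib

/- STATEMENT 11: dim Ell(Γ) equals the number of elliptic conjugacy classes. -/

open scoped Classical

noncomputable section

variable (Γ : Type) [Group Γ] [Fintype Γ]

/-- The complexified Grothendieck group `G_ℂ(Γ)` of finite-dimensional complex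
representations, realized as the space of virtual characters: the `ℂ`-span of
the characters inside the functions `Γ → ℂ`. -/
def charSpace : Submodule ℂ (Γ → ℂ) :=
  Submodule.span ℂ {f | ∃ W : FDRep ℂ Γ, f = FDRep.character W}

/-- The character of the representation induced from a subgroup `H ≤ Γ`
(given by the standard induced-character formula). -/
def indChar (H : Subgroup Γ) (f : ↥H → ℂ) : Γ → ℂ := fun γ =>
  (Nat.card ↥H : ℂ)⁻¹ *
    ∑ x : Γ, (if h : x⁻¹ * γ * x ∈ H then f ⟨x⁻¹ * γ * x, h⟩ else 0)

variable {E : Type} [AddCommGroup E] [Module ℝ E] [FiniteDimensional ℝ E]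

/-- `γ` is elliptic (w.r.t. the real representation `(ρ,E)`) when
`E^{ρ(γ)} = 0`. -/
def IsElliptic (ρ : Representation ℝ Γ E) (γ : Γ) : Prop :=
  ∀ v : E, ρ γ v = v → v = 0

/-- The span `Σ_{H ∈ L} Ind_H^Γ (G_ℂ(H))` of characters induced from the
subgroups `H` with `E^{ρ(H)} ≠ 0`. -/
def indSub (ρ : Representation ℝ Γ E) : Submodule ℂ (Γ → ℂ) :=
  Submodule.span ℂ {f | ∃ H : Subgroup Γ,
    (∃ v : E, v ≠ 0 ∧ ∀ h ∈ H, ρ h v = v) ∧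
    ∃ W : FDRep ℂ ↥H, f = indChar Γ H (FDRep.character W)}

/-! Characters span the class functions: a class function orthogonal to every character gives
a central element of `ℂ[Γ]` that acts with trace zero, hence (Schur) as zero, on every simple
module, so it vanishes by Maschke. Induced characters are class functions vanishing on elliptic
elements, because no conjugate of an elliptic element fixes a nonzero vector. Conversely, if `γ`
is not elliptic then `⟨γ⟩` fixes a nonzero vector, and inducing the point mass at `γ` from `⟨γ⟩`
gives a nonzero multiple of the indicator of the class of `γ`. Hence `Ell(Γ)` is the space of
class functions modulo those vanishing on the elliptic classes, i.e. the functions on the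
elliptic classes. -/

universe u

section ClassFunctions

variable (k : Type*) [Field k] (G : Type*) [Group G]

def classFun : Submodule k (G → k) where
  carrier := {f | ∀ ⦃x y : G⦄, IsConj x y → f x = f y}
  add_mem' hf hg x y h := by simp only [Pi.add_apply, hf h, hg h]
  zero_mem' _ _ _ := rfl
  smul_mem' c _ hf x y h := by simp only [Pi.smul_apply, hf h]

def classFunEquiv : (ConjClasses G → k) ≃ₗ[k] classFun k G :=
  LinearEquiv.ofBijective
    ((LinearMap.funLeft k k (ConjClasses.mk : G → ConjClasses G)).codRestrict (classFun k G)
      fun g _ _ h => congrArg g (ConjClasses.mk_eq_mk_iff_isConj.2 h))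
    ⟨fun _ _ h => LinearMap.funLeft_injective_of_surjective _ _ _ ConjClasses.mk_surjective
        (congrArg Subtype.val h),
      fun f => ⟨Quotient.lift (s := IsConj.setoid G) f.1 fun _ _ h => f.2 h, rfl⟩⟩

variable {k G}

@[simp]
theorem classFunEquiv_apply_apply (g : ConjClasses G → k) (x : G) :
    (classFunEquiv k G g : G → k) x = g (ConjClasses.mk x) :=
  rfl

theorem classFun_eq_top [IsMulCommutative G] : classFun k G = ⊤ := by
  refine eq_top_iff.2 fun f _ x y h => ?_
  obtain ⟨c, rfl⟩ := isConj_iff.1 h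
  rw [isMulCommutative_iff.1 ‹_› c x, mul_inv_cancel_right]

theorem eq_smul_indicator_of_mem_classFun {f : G → k} (hf : f ∈ classFun k G)
    {c : ConjClasses G} (hsupp : ∀ x ∉ c.carrier, f x = 0) {γ : G} (hγ : γ ∈ c.carrier) :
    f = f γ • c.carrier.indicator 1 := by
  ext x
  by_cases hx : x ∈ c.carrier
  · rw [ConjClasses.mem_carrier_iff_mk_eq] at hx hγ
    simp [Set.indicator_of_mem, ConjClasses.mem_carrier_iff_mk_eq, hx,
      hf (ConjClasses.mk_eq_mk_iff_isConj.1 (hx.trans hγ.symm))]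
  · simp [hsupp x hx, hx]

theorem classFun_inf_ker_restrict_le [Fintype G] {S : Set G} {P : Submodule k (G → k)}
    (hP : ∀ c ∉ ConjClasses.mk '' S, c.carrier.indicator 1 ∈ P) :
    classFun k G ⊓ LinearMap.ker (LinearMap.funLeft k k ((↑) : S → G)) ≤ P := by
  rintro f ⟨hf, hS⟩
  obtain ⟨g, hg⟩ := (classFunEquiv k G).surjective ⟨f, hf⟩
  have hgf (x : G) : g (ConjClasses.mk x) = f x := congrArg (fun φ : classFun k G => φ.1 x) hg
  have hf_eq : f = ∑ c, g c • c.carrier.indicator 1 := by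
    ext x
    simp [← hgf, Finset.sum_apply, Set.indicator_apply, ConjClasses.mem_carrier_iff_mk_eq]
  rw [hf_eq]
  refine P.sum_mem fun c _ => ?_
  by_cases hc : c ∈ ConjClasses.mk '' S
  · obtain ⟨x, hx, rfl⟩ := hc
    simp [hgf, show f x = 0 from congrFun hS ⟨x, hx⟩]
  · exact P.smul_mem _ (hP c hc)

theorem finrank_classFun_quotient_ker_restrict [Fintype G] (S : Set G) :
    Module.finrank k (classFun k G ⧸ (LinearMap.ker (LinearMap.funLeft k k ((↑) : S → G))).comap
      (classFun k G).subtype) = (ConjClasses.mk '' S).ncard := by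
  let Q := LinearMap.funLeft k k ((↑) : ConjClasses.mk '' S → ConjClasses G) ∘ₗ
    (classFunEquiv k G).symm.toLinearMap
  have hQ : Function.Surjective Q :=
    (LinearMap.funLeft_surjective_of_injective k k _ Subtype.val_injective).comp
      (classFunEquiv k G).symm.surjective
  have hker : LinearMap.ker Q =
      (LinearMap.ker (LinearMap.funLeft k k ((↑) : S → G))).comap (classFun k G).subtype := by
    ext f
    obtain ⟨g, rfl⟩ := (classFunEquiv k G).surjective f
    simp [Q, funext_iff]
  rw [← hker, (Q.quotKerEquivOfSurjective hQ).finrank_eq, Module.finrank_fintype_fun_eq_card,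
    ← Nat.card_eq_fintype_card, Nat.card_coe_set_eq]

end ClassFunctions

section Completeness

variable {k : Type u} [Field k]

theorem IsSimpleModule.smul_eq_zero_of_trace_eq_zero [IsAlgClosed k] [CharZero k]
    {A M : Type*} [Ring A] [Algebra k A] [AddCommGroup M] [Module k M] [Module A M]
    [IsScalarTower k A M] [IsSimpleModule A M] [FiniteDimensional k M] {z : A}
    (hz : ∀ a : A, Commute a z) (htr : LinearMap.trace k M (Algebra.lsmul k k M z) = 0)
    (m : M) : z • m = 0 := by
  let φ : Module.End A M :=
    { toFun := (z • ·)
      map_add' := smul_add z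
      map_smul' := fun a m => by simp only [smul_smul, (hz a).eq, RingHom.id_apply] }
  obtain ⟨c, hc⟩ :=
    (IsSimpleModule.algebraMap_end_bijective_of_isAlgClosed k (A := A) (V := M)).2 φ
  have hφ : Algebra.lsmul k k M z = c • LinearMap.id := by
    ext m
    exact (congrArg (· m) hc).symm
  have : Nontrivial M := IsSimpleModule.nontrivial A M
  have hc0 : c = 0 := by
    rw [hφ, map_smul, LinearMap.trace_id, smul_eq_mul, mul_eq_zero] at htr
    exact htr.resolve_right (Nat.cast_ne_zero.2 Module.finrank_pos.ne')
  simpa [hc0] using congrArg (· m) hφ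

theorem eq_zero_of_forall_simple_trace_eq_zero [IsAlgClosed k] [CharZero k] {A : Type*}
    [Ring A] [Algebra k A] [FiniteDimensional k A] [IsSemisimpleModule A A] {z : A}
    (hz : ∀ a : A, Commute a z)
    (htr : ∀ S : Submodule A A, IsSimpleModule A S →
      LinearMap.trace k S (Algebra.lsmul k k S z) = 0) : z = 0 := by
  have hle : sSup {S : Submodule A A | IsSimpleModule A S} ≤
      LinearMap.ker (LinearMap.toSpanSingleton A A z) := by
    refine sSup_le fun S (hS : IsSimpleModule A S) s hs => ?_
    have := IsSimpleModule.smul_eq_zero_of_trace_eq_zero (k := k) (M := S) hz (htr S hS) ⟨s, hs⟩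
    simpa [(hz s).eq] using congrArg Subtype.val this
  have h1 := hle (IsSemisimpleModule.sSup_simples_eq_top A A ▸ Submodule.mem_top (x := (1 : A)))
  rwa [LinearMap.mem_ker, LinearMap.toSpanSingleton_apply, one_smul] at h1

variable {G : Type u} [Group G] [Fintype G]

theorem commute_sum_smul_of_inv {f : G → k} (hf : f ∈ classFun k G) (a : MonoidAlgebra k G) :
    Commute a (∑ x, f x • MonoidAlgebra.of k G x⁻¹) := by
  induction a using MonoidAlgebra.induction_on with
  | of g =>
    rw [Commute, SemiconjBy, Finset.mul_sum, Finset.sum_mul]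
    refine Fintype.sum_equiv (MulAut.conj g).toEquiv _ _ fun x => ?_
    simp only [mul_smul_comm, smul_mul_assoc, ← map_mul, MulEquiv.toEquiv_eq_coe,
      MulEquiv.coe_toEquiv, MulAut.conj_apply, ← hf (isConj_iff.2 ⟨g, rfl⟩)]
    congr 2
    group
  | add a b ha hb => exact ha.add_left hb
  | smul r a ha => exact ha.smul_left r

theorem eq_zero_of_sum_mul_character_inv_eq_zero [IsAlgClosed k] [CharZero k] {f : G → k}
    (hf : f ∈ classFun k G) (horth : ∀ V : FDRep k G, ∑ x, f x * V.character x⁻¹ = 0) :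
    f = 0 := by
  have hz : ∑ x, f x • MonoidAlgebra.of k G x⁻¹ = 0 := by
    refine eq_zero_of_forall_simple_trace_eq_zero (k := k) (commute_sum_smul_of_inv hf)
      fun S _ => ?_
    -- `ofModule' S` is the representation `g ↦ (of g • ·)` on `S`, so the trace on `S` of
    -- the element above is the pairing of `f` with the character of `S`
    rw [← horth (FDRep.of (Representation.ofModule' S))]
    simp only [map_sum, map_smul, smul_eq_mul]
    rfl
  have hli := (MonoidAlgebra.basis G k).linearIndependent.comp _ inv_injective
  funext x
  simpa using Fintype.linearIndependent_iff.1 hli f (by simpa using hz) x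

end Completeness

theorem charSpace_eq_classFun (G : Type) [Group G] [Fintype G] : charSpace G = classFun ℂ G := by
  have hle : charSpace G ≤ classFun ℂ G := by
    refine Submodule.span_le.2 ?_
    rintro _ ⟨V, rfl⟩ x y h
    obtain ⟨g, rfl⟩ := isConj_iff.1 h
    exact (V.char_conj x g).symm
  refine Submodule.eq_of_le_of_finrank_le hle ?_
  let Ψ : classFun ℂ G →ₗ[ℂ] Module.Dual ℂ (charSpace G) :=
    (LinearMap.funLeft ℂ ℂ (·⁻¹) ∘ₗ (charSpace G).subtype).dualMap ∘ₗ
      dotProductBilin ℂ ℂ ∘ₗ (classFun ℂ G).subtype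
  have hΨ : Function.Injective Ψ := by
    refine (injective_iff_map_eq_zero Ψ).2 fun f hf => Subtype.ext <|
      eq_zero_of_sum_mul_character_inv_eq_zero f.2 fun V => ?_
    simpa [Ψ, dotProduct] using
      LinearMap.congr_fun hf ⟨V.character, Submodule.subset_span ⟨V, rfl⟩⟩
  simpa [Subspace.dual_finrank_eq] using LinearMap.finrank_le_finrank_of_injective hΨ

theorem Representation.apply_eq_self_of_mem_zpowers {k G V : Type*} [CommSemiring k] [Group G]
    [AddCommMonoid V] [Module k V] (ρ : Representation k G V) {γ : G} {v : V}
    (hv : ρ γ v = v) {h : G} (hh : h ∈ Subgroup.zpowers γ) : ρ h v = v := by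
  obtain ⟨n, rfl⟩ := Subgroup.mem_zpowers_iff.1 hh
  clear hh
  induction n using Int.induction_on with
  | zero => simp
  | succ n ih => rw [zpow_add_one, map_mul, Module.End.mul_apply, hv, ih]
  | pred n ih =>
    rw [zpow_sub_one, map_mul, Module.End.mul_apply, ρ.inv_apply_eq_iff.2 hv.symm, ih]

section Elliptic

variable {G : Type} [Group G] {V : Type} [AddCommGroup V] [Module ℝ V]

theorem IsElliptic.conj {ρ : Representation ℝ G V} {γ : G} (h : IsElliptic G ρ γ) (x : G) :
    IsElliptic G ρ (x⁻¹ * γ * x) := by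
  intro v hv
  have : ρ x v = 0 := h _ (by simpa [map_mul] using congrArg (ρ x) hv)
  simpa using congrArg (ρ x⁻¹) this

variable [Fintype G]

theorem indChar_mem_classFun (H : Subgroup G) (f : H → ℂ) : indChar G H f ∈ classFun ℂ G := by
  intro x y h
  obtain ⟨c, rfl⟩ := isConj_iff.1 h
  simp only [indChar]
  congr 1
  refine (Fintype.sum_equiv (Equiv.mulLeft c⁻¹) _ _ fun y => ?_).symm
  simp only [Equiv.coe_mulLeft,
    show y⁻¹ * (c * x * c⁻¹) * y = (c⁻¹ * y)⁻¹ * x * (c⁻¹ * y) by group]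
  rfl

theorem indChar_apply_eq_zero {H : Subgroup G} (f : H → ℂ) {γ : G}
    (h : ∀ x : G, x⁻¹ * γ * x ∉ H) : indChar G H f γ = 0 := by
  simp [indChar, h]

def indCharLinearMap (H : Subgroup G) : (H → ℂ) →ₗ[ℂ] (G → ℂ) where
  toFun := indChar G H
  map_add' f g := by
    ext γ
    simp [indChar, ← mul_add, ← Finset.sum_add_distrib, apply_dite₂]
  map_smul' c f := by
    ext γ
    simp [indChar, Finset.mul_sum, mul_left_comm]

theorem indChar_single_apply (H : Subgroup G) (γ : H) (γ' : G) :
    indChar G H (Pi.single γ 1) γ' =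
      (Nat.card H : ℂ)⁻¹ * (Finset.univ.filter fun x : G => x⁻¹ * γ' * x = γ).card := by
  have hmem (x : G) : x⁻¹ * γ' * x = γ → x⁻¹ * γ' * x ∈ H := fun h => h ▸ γ.2
  simp [indChar, Pi.single_apply, Subtype.ext_iff, ← ite_and, Finset.sum_boole,
    and_iff_right_of_imp (hmem _)]

theorem indChar_mem_indSub {ρ : Representation ℝ G V} {H : Subgroup G} {v : V} (hv : v ≠ 0)
    (hH : ∀ h ∈ H, ρ h v = v) {f : H → ℂ} (hf : f ∈ charSpace H) :
    indChar G H f ∈ indSub G ρ := by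
  have : (charSpace H).map (indCharLinearMap H) ≤ indSub G ρ :=
    (Submodule.map_span_le _ _ _).2 fun _ ⟨W, hW⟩ =>
      Submodule.subset_span ⟨H, ⟨v, hv, hH⟩, W, hW ▸ rfl⟩
  exact this ⟨f, hf, rfl⟩

theorem indicator_carrier_mem_indSub {ρ : Representation ℝ G V} {γ : G}
    (hγ : ¬ IsElliptic G ρ γ) : (ConjClasses.mk γ).carrier.indicator 1 ∈ indSub G ρ := by
  obtain ⟨v, hγv, hv⟩ : ∃ v, ρ γ v = v ∧ v ≠ 0 := by simpa [IsElliptic] using hγ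
  set H := Subgroup.zpowers γ
  set f := indChar G H (Pi.single ⟨γ, Subgroup.mem_zpowers γ⟩ 1) with hf_def
  have hf : f ∈ indSub G ρ :=
    indChar_mem_indSub hv (fun _ hh => ρ.apply_eq_self_of_mem_zpowers hγv hh)
      (by rw [charSpace_eq_classFun, classFun_eq_top]; trivial)
  have hsupp : ∀ x ∉ (ConjClasses.mk γ).carrier, f x = 0 := by
    intro x hx
    rw [hf_def, indChar_single_apply, Finset.card_eq_zero.2, Nat.cast_zero, mul_zero]
    refine Finset.filter_eq_empty_iff.2 fun y _ hy => hx ?_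
    rw [ConjClasses.mem_carrier_iff_mk_eq, ConjClasses.mk_eq_mk_iff_isConj]
    exact isConj_iff.2 ⟨y⁻¹, by simpa using hy⟩
  have hfγ : f γ ≠ 0 := by
    rw [hf_def, indChar_single_apply]
    refine mul_ne_zero (inv_ne_zero (Nat.cast_ne_zero.2 Nat.card_pos.ne')) ?_
    exact Nat.cast_ne_zero.2 (Finset.card_ne_zero_of_mem (a := 1) (by simp))
  have hf_eq : f = f γ • (ConjClasses.mk γ).carrier.indicator 1 :=
    eq_smul_indicator_of_mem_classFun (indChar_mem_classFun H _) hsupp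
      ConjClasses.mem_carrier_mk
  rw [hf_eq] at hf
  exact (Submodule.smul_mem_iff _ hfγ).1 hf

theorem indSub_eq_classFun_inf_ker (ρ : Representation ℝ G V) :
    indSub G ρ = classFun ℂ G ⊓
      LinearMap.ker (LinearMap.funLeft ℂ ℂ ((↑) : {γ | IsElliptic G ρ γ} → G)) := by
  refine le_antisymm (Submodule.span_le.2 ?_) (classFun_inf_ker_restrict_le fun c hc => ?_)
  · rintro _ ⟨H, ⟨v, hv, hH⟩, W, rfl⟩
    exact ⟨indChar_mem_classFun H _, funext fun ⟨γ, hγ⟩ =>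
      indChar_apply_eq_zero _ fun x hx => hv (hγ.conj x v (hH _ hx))⟩
  · obtain ⟨γ, rfl⟩ := ConjClasses.mk_surjective c
    exact indicator_carrier_mem_indSub fun h => hc ⟨γ, h, rfl⟩

end Elliptic

/-- The dimension of the elliptic quotient
`Ell(Γ) = G_ℂ(Γ) / Σ_{H ∈ L} Ind_H^Γ(G_ℂ(H))` equals the number of elliptic
conjugacy classes of `Γ`. -/
theorem finrank_elliptic_quotient_eq_card_elliptic_classes
    (ρ : Representation ℝ Γ E) :
    Module.finrank ℂ
      (↥(charSpace Γ) ⧸ (indSub Γ ρ).comap (charSpace Γ).subtype) =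
    {c : ConjClasses Γ | ∃ γ : Γ, ConjClasses.mk γ = c ∧
      IsElliptic Γ ρ γ}.ncard := by
  rw [charSpace_eq_classFun, indSub_eq_classFun_inf_ker, Submodule.comap_inf,
    Submodule.comap_subtype_self, top_inf_eq, finrank_classFun_quotient_ker_restrict]
  congr 1
  ext c
  simp [and_comm]

end
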